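/- arXiv:2310.04968 — 5 statements merged into one kernel-verified Lean document; each statement's English description precedes it below -/
import Mathlib

section
/- The stationary distribution W(β,c;x) satisfies L_BD W = 0, where (L_BD f)(x) = -∑_{j=1}^n [ (B_j(x)+D_j(x)) f(x) - B_j(x-e_j) f(x-e_j) - D_j(x+e_j) f(x+e_j) ] with B_j(x) = β+|x|, D_j(x) = x_j/c_j (terms with x - e_j ∉ ℕ₀ⁿ omitted). -/
/-- The multivariate Meixner weight (negative multinomial distribution). -/
noncomputable def meixnerW (n : ℕ) (β : ℝ) (c : Fin n → ℝ) (x : Fin n → ℕ) : ℝ :=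
  (ascPochhammer ℝ (∑ i, x i)).eval β *
    (∏ i, c i ^ x i / (Nat.factorial (x i))) * (1 - ∑ i, c i) ^ β

lemma meixnerW_forward (n : ℕ) (β : ℝ) (c : Fin n → ℝ) (hc : ∀ j, c j ≠ 0)
    (x : Fin n → ℕ) (j : Fin n) :
    (((x j : ℝ) + 1) / c j) * meixnerW n β c ((x + Pi.single j 1 : Fin n → ℕ))
      = (β + ∑ i, (x i : ℝ)) * meixnerW n β c x := by
  have hg : ∀ i, ((x + Pi.single j 1 : Fin n → ℕ)) i = if i = j then x j + 1 else x i := by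
    intro i
    by_cases h : i = j <;> simp [Pi.single_apply, h]
  have hsum : (∑ i, ((x + Pi.single j 1 : Fin n → ℕ)) i) = (∑ i, x i) + 1 := by
    simp only [hg]
    have : ∀ i, (if i = j then x j + 1 else x i) = x i + (if i = j then 1 else 0) := by
      intro i; by_cases h : i = j <;> simp [h]
    simp only [this, Finset.sum_add_distrib, Finset.sum_ite_eq' Finset.univ j (fun _ => 1),
      Finset.mem_univ, if_pos]
  have hprod : (∏ i, c i ^ ((x + Pi.single j 1 : Fin n → ℕ)) i / (Nat.factorial (((x + Pi.single j 1 : Fin n → ℕ)) i)))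
      = (∏ i, c i ^ x i / (Nat.factorial (x i))) * (c j / ((x j : ℝ) + 1)) := by
    rw [← Finset.mul_prod_erase Finset.univ _ (Finset.mem_univ j),
        ← Finset.mul_prod_erase Finset.univ (fun i => c i ^ x i / (Nat.factorial (x i) : ℝ))
          (Finset.mem_univ j)]
    have h1 : ∀ i ∈ Finset.univ.erase j,
        c i ^ ((x + Pi.single j 1 : Fin n → ℕ)) i / (Nat.factorial (((x + Pi.single j 1 : Fin n → ℕ)) i) : ℝ)
          = c i ^ x i / (Nat.factorial (x i) : ℝ) := by
      intro i hi
      rw [hg i, if_neg (Finset.mem_erase.1 hi).1]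
    rw [Finset.prod_congr rfl h1, hg j, if_pos rfl]
    have hfac : (Nat.factorial (x j + 1) : ℝ) = ((x j : ℝ) + 1) * (Nat.factorial (x j) : ℝ) := by
      rw [Nat.factorial_succ]; push_cast; ring
    have hxj : ((x j : ℝ) + 1) ≠ 0 := by positivity
    have hfj : (Nat.factorial (x j) : ℝ) ≠ 0 := Nat.cast_ne_zero.2 (Nat.factorial_ne_zero _)
    rw [hfac, pow_succ]
    field_simp
  have hpoch : (ascPochhammer ℝ ((∑ i, x i) + 1)).eval β
      = (ascPochhammer ℝ (∑ i, x i)).eval β * (β + (∑ i, x i : ℕ)) := by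
    rw [ascPochhammer_succ_eval]
  unfold meixnerW
  rw [hsum, hprod, hpoch]
  have hxj : ((x j : ℝ) + 1) ≠ 0 := by positivity
  have hcast : ((∑ i, x i : ℕ) : ℝ) = ∑ i, (x i : ℝ) := by push_cast; rfl
  rw [hcast]
  field_simp [hc j]

/-- `L_BD W = 0`, with `B_j(x) = β + |x|`, `D_j(x) = x_j/c_j`,
backward terms omitted when `x_j = 0`. -/
theorem meixnerW_stationary (n : ℕ) (β : ℝ) (c : Fin n → ℝ) (hβ : 0 < β)
    (hc : ∀ j, 0 < c j) (hsum : ∑ j, c j < 1) (x : Fin n → ℕ) :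
    ∑ j, (((β + ∑ i, (x i : ℝ)) + (x j : ℝ) / c j) * meixnerW n β c x
      - (if x j = 0 then 0 else
          (β + ∑ i, (((x - Pi.single j 1 : Fin n → ℕ)) i : ℝ)) * meixnerW n β c ((x - Pi.single j 1 : Fin n → ℕ)))
      - (((x j : ℝ) + 1) / c j) * meixnerW n β c (x + Pi.single j 1)) = 0 := by
  have hc' : ∀ j, c j ≠ 0 := fun j => (hc j).ne'
  apply Finset.sum_eq_zero
  intro j _
  rw [meixnerW_forward n β c hc' x j]
  by_cases h : x j = 0
  · rw [if_pos h, h]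
    simp
  · rw [if_neg h]
    set y : Fin n → ℕ := x - Pi.single j 1 with hy
    have hxy : y + Pi.single j 1 = x := by
      funext i
      by_cases hij : i = j
      · subst hij
        simp [hy, Pi.single_apply]
        omega
      · simp [hy, Pi.single_apply, hij]
    have hyj : ((y j : ℝ) + 1) = (x j : ℝ) := by
      have : y j + 1 = x j := by simp [hy, Pi.single_apply]; omega
      exact_mod_cast this
    have := meixnerW_forward n β c hc' y j
    rw [hxy, hyj] at this
    rw [← this]
    ring
end

section
/- A degree-one polynomial P(x) = 1 + ∑_i a_i x_i satisfies H̃ P = λ P with H̃ = ∑_j [(β+|x|)(1-E_j) + c_j^{-1}x_j(1-E_j^{-1})] if and only if -∑_k a_k + c_i^{-1} a_i = λ a_i for all i and -β ∑_k a_k = λ; in particular, for λ ≠ 0 with λ ≠ c_i^{-1} for all i, this forces a_i = λ/(β(λ - c_i^{-1})). -/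
/-!
Each difference `P x - P (x ± e_j)` of an affine `P` is the constant `∓ a_j`, so `H̃ P` is again
affine in `x`, and `H̃ P = λ P` amounts to matching the constant term and the coefficient of each
`x_i`. The closed form for `a_i` then follows by eliminating `∑ a_k = -λ / β`.
-/

open Finset

section

variable {R ι : Type*} [CommRing R] [Fintype ι] [DecidableEq ι]

lemma affine_eq_zero_iff (b₀ : R) (b : ι → R) :
    (∀ x : ι → R, b₀ + ∑ i, b i * x i = 0) ↔ b₀ = 0 ∧ ∀ i, b i = 0 := by
  refine ⟨fun h => ?_, fun ⟨h₀, h⟩ x => by simp [h₀, h]⟩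
  have h₀ : b₀ = 0 := by simpa using h 0
  refine ⟨h₀, fun i => ?_⟩
  simpa [h₀, Pi.single_apply] using h (Pi.single i 1)

lemma affine_add_single (a₀ : R) (a x : ι → R) (j : ι) (t : R) :
    a₀ + ∑ i, a i * (x + Pi.single j t : ι → R) i = (a₀ + ∑ i, a i * x i) + a j * t := by
  simp [mul_add, sum_add_distrib, Pi.single_apply, add_assoc]

lemma affine_sub_single (a₀ : R) (a x : ι → R) (j : ι) (t : R) :
    a₀ + ∑ i, a i * (x - Pi.single j t : ι → R) i = (a₀ + ∑ i, a i * x i) - a j * t := by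
  simp [mul_sub, sum_sub_distrib, Pi.single_apply, add_sub_assoc]

/-- The operator `H̃` of the paper, with the weight `d j` standing for `c_j⁻¹`. -/
def shiftOp (β : R) (d : ι → R) (f : (ι → R) → R) (x : ι → R) : R :=
  ∑ j, ((β + ∑ i, x i) * (f x - f (x + Pi.single j 1))
    + d j * x j * (f x - f (x - Pi.single j 1)))

lemma shiftOp_affine (β a₀ : R) (d a x : ι → R) :
    shiftOp β d (fun x => a₀ + ∑ i, a i * x i) x =
      -(β + ∑ i, x i) * ∑ j, a j + ∑ j, d j * a j * x j := by
  simp only [shiftOp, affine_add_single, affine_sub_single, mul_sum, ← sum_add_distrib]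
  exact sum_congr rfl fun j _ => by ring

lemma shiftOp_affine_eq_smul_iff (β lam : R) (d a : ι → R) :
    (∀ x, shiftOp β d (fun x => 1 + ∑ i, a i * x i) x = lam * (1 + ∑ i, a i * x i)) ↔
      (∀ i, -(∑ k, a k) + d i * a i = lam * a i) ∧ -β * ∑ k, a k = lam := by
  have hres : ∀ x : ι → R,
      shiftOp β d (fun x => 1 + ∑ i, a i * x i) x - lam * (1 + ∑ i, a i * x i) =
        (-β * ∑ k, a k - lam) + ∑ i, (-(∑ k, a k) + d i * a i - lam * a i) * x i := by
    intro x
    rw [shiftOp_affine]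
    simp only [sub_mul, add_mul, neg_mul, sum_sub_distrib, sum_add_distrib, sum_neg_distrib,
      mul_assoc, ← mul_sum]
    ring
  simp_rw [← sub_eq_zero (b := lam * _), hres, affine_eq_zero_iff, sub_eq_zero, and_comm]

end

theorem deg_one_eigenfunction_general (n : ℕ) (β : ℝ) (c : Fin n → ℝ)
    (hβ : 0 < β) (a : Fin n → ℝ) (lam : ℝ) :
    let Ht : ((Fin n → ℝ) → ℝ) → ((Fin n → ℝ) → ℝ) := fun f x =>
      ∑ j, ((β + ∑ i, x i) * (f x - f (x + Pi.single j 1))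
        + (c j)⁻¹ * x j * (f x - f (x - Pi.single j 1)))
    let P : (Fin n → ℝ) → ℝ := fun x => 1 + ∑ i, a i * x i
    ((∀ x, Ht P x = lam * P x) ↔
      ((∀ i, -(∑ k, a k) + (c i)⁻¹ * a i = lam * a i) ∧ -β * ∑ k, a k = lam)) ∧
    ((∀ x, Ht P x = lam * P x) → lam ≠ 0 → (∀ i, lam ≠ (c i)⁻¹) →
      ∀ i, a i = lam / (β * (lam - (c i)⁻¹))) := by
  intro Ht P
  have heigen := shiftOp_affine_eq_smul_iff β lam (fun j => (c j)⁻¹) a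
  refine ⟨heigen, fun h _ hlam i => ?_⟩
  obtain ⟨hcoeff, hsum⟩ := heigen.mp h
  have hdenom : β * (lam - (c i)⁻¹) ≠ 0 := mul_ne_zero hβ.ne' (sub_ne_zero.mpr (hlam i))
  rw [eq_div_iff hdenom]
  linear_combination -β * hcoeff i + hsum

/-- a degree-one polynomial `P(x) = 1 + ∑ a_i x_i` is an
eigenfunction of `H̃` with eigenvalue `λ` iff the stated linear equations hold;
moreover for `λ ≠ 0`, `λ ≠ c_i⁻¹`, the coefficients are forced. -/
theorem deg_one_eigenfunction (n : ℕ) (β : ℝ) (c : Fin n → ℝ)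
    (hβ : 0 < β) (hc : ∀ i, 0 < c i) (a : Fin n → ℝ) (lam : ℝ) :
    let Ht : ((Fin n → ℝ) → ℝ) → ((Fin n → ℝ) → ℝ) := fun f x =>
      ∑ j, ((β + ∑ i, x i) * (f x - f (x + Pi.single j 1))
        + (c j)⁻¹ * x j * (f x - f (x - Pi.single j 1)))
    let P : (Fin n → ℝ) → ℝ := fun x => 1 + ∑ i, a i * x i
    ((∀ x, Ht P x = lam * P x) ↔
      ((∀ i, -(∑ k, a k) + (c i)⁻¹ * a i = lam * a i) ∧ -β * ∑ k, a k = lam)) ∧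
    ((∀ x, Ht P x = lam * P x) → lam ≠ 0 → (∀ i, lam ≠ (c i)⁻¹) →
      ∀ i, a i = lam / (β * (lam - (c i)⁻¹))) :=
  deg_one_eigenfunction_general n β c hβ a lam
end

section
/- For positive reals c_1,…,c_n with ∑ c_i < 1, and λ an eigenvalue of F(c)_{ij} = -1 + c_i^{-1}δ_{ij} with λ ∉ {c_i^{-1}}, the numbers u_i = λ/(λ - c_i^{-1}) satisfy ∑_{i=1}^n c_i u_i = |c| - 1, where |c| = ∑ c_i. -/
/-- for an eigenvalue `λ` of `F(c)` avoiding `{c_i⁻¹}`, the numbers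
`u_i = λ/(λ - c_i⁻¹)` satisfy `∑ c_i u_i = |c| - 1`. -/
theorem first_constraint (n : ℕ) (c : Fin n → ℝ) (hc : ∀ i, 0 < c i)
    (hsum : ∑ i, c i < 1) (lam : ℝ) (hne : ∀ i, lam ≠ (c i)⁻¹)
    (heig : Matrix.det (lam • (1 : Matrix (Fin n) (Fin n) ℝ) -
      Matrix.of (fun i j => -1 + (c i)⁻¹ * (if i = j then 1 else 0))) = 0) :
    ∑ i, c i * (lam / (lam - (c i)⁻¹)) = (∑ i, c i) - 1 := by
  set d : Fin n → ℝ := fun i => lam - (c i)⁻¹ with hd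
  have hdne : ∀ i, d i ≠ 0 := fun i => sub_ne_zero.mpr (hne i)
  -- rewrite the matrix as diagonal d + col 1 * row 1
  have hM : (lam • (1 : Matrix (Fin n) (Fin n) ℝ) -
      Matrix.of (fun i j => -1 + (c i)⁻¹ * (if i = j then 1 else 0)))
      = Matrix.diagonal d + Matrix.replicateCol Unit (fun _ => (1:ℝ)) * Matrix.replicateRow Unit (fun _ => (1:ℝ)) := by
    ext i j
    simp [Matrix.mul_apply, Matrix.diagonal, Matrix.one_apply, hd]
    by_cases h : i = j <;> simp [h] <;> ring
  rw [hM] at heig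
  have hdet : Matrix.det (Matrix.diagonal d) = ∏ i, d i := Matrix.det_diagonal
  have hunit : IsUnit (Matrix.det (Matrix.diagonal d)) := by
    rw [hdet]
    exact (Finset.prod_ne_zero_iff.mpr (fun i _ => hdne i)).isUnit
  rw [Matrix.det_add_replicateCol_mul_replicateRow hunit] at heig
  have hinvd : (Matrix.diagonal d)⁻¹ = Matrix.diagonal (fun i => (d i)⁻¹) :=
    Matrix.inv_eq_right_inv (by
      rw [Matrix.diagonal_mul_diagonal]
      convert Matrix.diagonal_one
      exact mul_inv_cancel₀ (hdne _))
  rw [hinvd] at heig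
  have hkey : 1 + ∑ i, (d i)⁻¹ = 0 := by
    have hprod : (∏ i, d i) ≠ 0 := Finset.prod_ne_zero_iff.mpr (fun i _ => hdne i)
    have h1 : Matrix.det (1 + Matrix.replicateRow Unit (fun _ : Fin n => (1:ℝ)) *
        Matrix.diagonal (fun i => (d i)⁻¹) * Matrix.replicateCol Unit (fun _ : Fin n => (1:ℝ)))
        = 1 + ∑ i, (d i)⁻¹ := by
      rw [Matrix.det_unique]
      simp [Matrix.mul_apply, Matrix.diagonal, Matrix.one_apply, Ring.inverse_eq_inv,
        Finset.mul_sum]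
    rw [h1] at heig
    rcases mul_eq_zero.mp heig with h | h
    · exact absurd (hdet ▸ h) hprod
    · exact h
  have hsum' : ∑ i, (d i)⁻¹ = -1 := by linarith
  have : ∀ i, c i * (lam / (lam - (c i)⁻¹)) = c i + (d i)⁻¹ := by
    intro i
    have hci := (hc i).ne'
    have h2 : -1 + c i * lam ≠ 0 := by
      have := mul_ne_zero hci (hdne i)
      rw [hd] at this
      intro h
      apply this
      field_simp
      linarith
    have hX : (-1 + c i * lam) * (-1 + c i * lam)⁻¹ = 1 := mul_inv_cancel₀ h2
    field_simp [hd, h2]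
    have h3 : c i * lam - 1 ≠ 0 := by intro h; apply h2; linarith
    have h4 : d i = (c i * lam - 1) / c i := by
      simp only [hd]; rw [eq_div_iff hci, sub_mul, inv_mul_cancel₀ hci]; ring
    rw [h4, one_div_div, div_eq_iff h3, add_mul, div_mul_cancel₀ _ h3]
    ring
  rw [Finset.sum_congr rfl (fun i _ => this i), Finset.sum_add_distrib, hsum']
  ring
end

section
/- For positive reals c_1,…,c_n and two distinct eigenvalues λ_j ≠ λ_k of F(c)_{il} = -1 + c_i^{-1}δ_{il}, both avoiding {c_i^{-1}}, the numbers u_{ij} = λ_j/(λ_j - c_i^{-1}) satisfy ∑_{i=1}^n c_i u_{ij} u_{ik} = |c| - 1. -/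
lemma eig_sum (n : ℕ) (c : Fin n → ℝ) (lam : ℝ) (hne : ∀ i, lam ≠ (c i)⁻¹)
    (heig : Matrix.det (lam • (1 : Matrix (Fin n) (Fin n) ℝ) -
      Matrix.of (fun i l => -1 + (c i)⁻¹ * (if i = l then 1 else 0))) = 0) :
    ∑ i, (lam - (c i)⁻¹)⁻¹ = -1 := by
  set d : Fin n → ℝ := fun i => lam - (c i)⁻¹ with hd
  have hdne : ∀ i, d i ≠ 0 := fun i => sub_ne_zero.mpr (hne i)
  have hM : (lam • (1 : Matrix (Fin n) (Fin n) ℝ) -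
      Matrix.of (fun i l => -1 + (c i)⁻¹ * (if i = l then 1 else 0)))
      = Matrix.diagonal d *
        (1 + Matrix.replicateCol (Fin 1) (fun i => (d i)⁻¹) *
          Matrix.replicateRow (Fin 1) (fun _ : Fin n => (1:ℝ))) := by
    ext i l
    simp [Matrix.mul_apply, Matrix.one_apply, Matrix.diagonal, Matrix.replicateCol, Matrix.replicateRow,
      Finset.mul_sum, hd]
    have key : ∀ m, (lam - (c m)⁻¹) * (lam - (c m)⁻¹)⁻¹ = 1 :=
      fun m => mul_inv_cancel₀ (hdne m)
    by_cases h : i = l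
    · subst h; simp; linear_combination -(key i)
    · simp [h]; linear_combination -(key i)
  erw [hM, Matrix.det_mul, Matrix.det_one_add_replicateCol_mul_replicateRow (ι := Fin 1), Matrix.det_diagonal] at heig
  have hprod : ∏ i, d i ≠ 0 := Finset.prod_ne_zero_iff.mpr (fun i _ => hdne i)
  rcases mul_eq_zero.mp heig with h | h
  · exact absurd h hprod
  · have := h
    simp [dotProduct] at this
    linarith [this]


/-- for two distinct eigenvalues `λ_j ≠ λ_k` of `F(c)`, both
avoiding `{c_i⁻¹}`, the numbers `u_{ij} = λ_j/(λ_j - c_i⁻¹)` satisfy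
`∑ c_i u_{ij} u_{ik} = |c| - 1`. -/
theorem second_constraint (n : ℕ) (c : Fin n → ℝ) (hc : ∀ i, 0 < c i)
    (lamj lamk : ℝ) (hjk : lamj ≠ lamk)
    (hnej : ∀ i, lamj ≠ (c i)⁻¹) (hnek : ∀ i, lamk ≠ (c i)⁻¹)
    (heigj : Matrix.det (lamj • (1 : Matrix (Fin n) (Fin n) ℝ) -
      Matrix.of (fun i l => -1 + (c i)⁻¹ * (if i = l then 1 else 0))) = 0)
    (heigk : Matrix.det (lamk • (1 : Matrix (Fin n) (Fin n) ℝ) -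
      Matrix.of (fun i l => -1 + (c i)⁻¹ * (if i = l then 1 else 0))) = 0) :
    ∑ i, c i * (lamj / (lamj - (c i)⁻¹)) * (lamk / (lamk - (c i)⁻¹))
      = (∑ i, c i) - 1 := by
  have Sj := eig_sum n c lamj hnej heigj
  have Sk := eig_sum n c lamk hnek heigk
  have hdiff : lamj - lamk ≠ 0 := sub_ne_zero.mpr hjk
  have hterm : ∀ i, c i * (lamj / (lamj - (c i)⁻¹)) * (lamk / (lamk - (c i)⁻¹))
      = c i + (lamk / (lamk - lamj)) * (lamj - (c i)⁻¹)⁻¹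
          + (lamj / (lamj - lamk)) * (lamk - (c i)⁻¹)⁻¹ := by
    intro i
    have h1 : lamj - (c i)⁻¹ ≠ 0 := sub_ne_zero.mpr (hnej i)
    have h2 : lamk - (c i)⁻¹ ≠ 0 := sub_ne_zero.mpr (hnek i)
    have h3 : lamk - lamj ≠ 0 := sub_ne_zero.mpr (Ne.symm hjk)
    have h4 : c i ≠ 0 := ne_of_gt (hc i)
    have hx : c i * (c i)⁻¹ = 1 := mul_inv_cancel₀ h4
    generalize hX : (c i)⁻¹ = x at *
    set a := (lamj - x)⁻¹ with ha
    set b := (lamk - x)⁻¹ with hb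
    set s := (lamj - lamk)⁻¹ with hs
    have e1 : (lamj - x) * a = 1 := mul_inv_cancel₀ h1
    have e2 : (lamk - x) * b = 1 := mul_inv_cancel₀ h2
    have es : (lamj - lamk) * s = 1 := mul_inv_cancel₀ hdiff
    have hneg : (lamk - lamj)⁻¹ = -s := by rw [hs, ← neg_sub lamj lamk, inv_neg]
    rw [div_eq_mul_inv, div_eq_mul_inv, div_eq_mul_inv, div_eq_mul_inv, hneg, ← ha, ← hb, ← hs]
    linear_combination (c i * lamj * lamk * s * b - c i * s * lamk) * e1
      + (-(c i * lamj * lamk * s * a) + c i * s * lamj) * e2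
      + (c i - c i * lamj * lamk * a * b) * es
      + (s * (lamj * b - lamk * a)) * hx
  rw [Finset.sum_congr rfl (fun i _ => hterm i)]
  rw [Finset.sum_add_distrib, Finset.sum_add_distrib, ← Finset.mul_sum, ← Finset.mul_sum,
    Sj, Sk]
  field_simp
  ring
end

section
/- Suppose u ∈ ℝ^{n×n} satisfies ∑_i c_i u_{ij} = |c|-1 for all j and ∑_i c_i u_{ij} u_{ik} = |c|-1 for j ≠ k. Then for j ≠ k, ∑_{x ∈ ℕ₀ⁿ} W(β,c;x) (1 + (1/β)∑_i u_{ij} x_i)(1 + (1/β)∑_i u_{ik} x_i) = 0. -/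
open Finset

namespace MeixnerAux

variable {n : ℕ}

/-- The unnormalized Meixner/negative-multinomial weight. -/
noncomputable def g (c : Fin n → ℝ) (α : ℝ) (x : Fin n → ℕ) : ℝ :=
  (ascPochhammer ℝ (∑ i, x i)).eval α * ∏ i, c i ^ x i / (Nat.factorial (x i))

lemma summable_geom_pi {s : ℝ} (h0 : 0 ≤ s) (h1 : s < 1) (n : ℕ) :
    Summable (fun x : Fin n → ℕ => s ^ (∑ i, x i)) := by
  induction n with
  | zero => exact .of_finite
  | succ m ih =>
    have hmul : Summable (fun p : ℕ × (Fin m → ℕ) => s ^ p.1 * s ^ (∑ i, p.2 i)) :=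
      Summable.mul_of_nonneg (f := fun k : ℕ => s ^ k)
        (g := fun x : Fin m → ℕ => s ^ (∑ i, x i))
        (summable_geometric_of_lt_one h0 h1) ih
        (fun _ => pow_nonneg h0 _) (fun _ => pow_nonneg h0 _)
    refine (Equiv.summable_iff (Fin.consEquiv (fun _ : Fin (m+1) => ℕ))).mp
      (hmul.congr fun p => ?_)
    show s ^ p.1 * s ^ (∑ i, p.2 i) = s ^ (∑ i, (Fin.cons p.1 p.2 : ∀ _ : Fin (m+1), ℕ) i)
    rw [Fin.sum_cons, pow_add]

lemma multinomial_term_le {c : Fin n → ℝ} (hc : ∀ i, 0 ≤ c i) (x : Fin n → ℕ) :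
    (Nat.multinomial univ x : ℝ) * ∏ i, c i ^ x i ≤ (∑ i, c i) ^ (∑ i, x i) := by
  rw [Finset.sum_pow_eq_sum_piAntidiag]
  refine Finset.single_le_sum (f := fun k => (Nat.multinomial univ k : ℝ) * ∏ i, c i ^ k i)
    (fun k _ => mul_nonneg (Nat.cast_nonneg _) (Finset.prod_nonneg fun i _ => pow_nonneg (hc i) _)) ?_
  simp [Finset.mem_piAntidiag]


lemma poch_le {α : ℝ} (hα : 0 < α) (N : ℕ) (hN : 1 ≤ N) (hαN : α ≤ N) (m : ℕ) :
    (ascPochhammer ℝ m).eval α ≤ (m.factorial : ℝ) * (((m : ℝ) + 1) ^ N * (N : ℝ) ^ N) := by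
  induction m with
  | zero =>
    simp only [ascPochhammer_zero, Polynomial.eval_one, Nat.factorial_zero, Nat.cast_one,
      Nat.cast_zero, zero_add, one_pow, one_mul]
    exact one_le_pow₀ (by exact_mod_cast hN)
  | succ m ih =>
    have hm0 : (0:ℝ) < (m:ℝ) + 1 := by positivity
    have hpos : (0:ℝ) ≤ (ascPochhammer ℝ m).eval α := (ascPochhammer_pos m α hα).le
    have h1 : (ascPochhammer ℝ (m+1)).eval α ≤
        ((m.factorial : ℝ) * (((m : ℝ) + 1) ^ N * (N : ℝ) ^ N)) * ((N : ℝ) + m) := by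
      rw [ascPochhammer_succ_eval]
      apply mul_le_mul ih (by linarith) (by linarith)
      positivity
    refine h1.trans ?_
    -- key: ((m+1)^N) * (N + m) ≤ (m+1) * (m+2)^N
    have hber : 1 + (N:ℝ) * (1 / ((m:ℝ)+1)) ≤ (1 + 1 / ((m:ℝ)+1)) ^ N := by
      apply one_add_mul_le_pow
      have : (0:ℝ) ≤ 1 / ((m:ℝ)+1) := by positivity
      linarith
    have hkey : (((m:ℝ) + 1) ^ N) * ((N : ℝ) + m) ≤ ((m:ℝ) + 1) * ((m:ℝ) + 2) ^ N := by
      have h2 : ((m:ℝ) + 2) = ((m:ℝ) + 1) * (1 + 1 / ((m:ℝ)+1)) := by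
        field_simp; ring
      have hpow : (0:ℝ) ≤ ((m:ℝ)+1)^N := by positivity
      have hstep : ((m:ℝ)+1) * (1 + (N:ℝ) * (1/((m:ℝ)+1))) = (m:ℝ) + 1 + N := by
        field_simp
      calc (((m:ℝ) + 1) ^ N) * ((N : ℝ) + m)
          ≤ (((m:ℝ) + 1) ^ N) * ((m:ℝ) + 1 + N) :=
            mul_le_mul_of_nonneg_left (by linarith) hpow
        _ = (((m:ℝ) + 1) ^ N) * (((m:ℝ)+1) * (1 + (N:ℝ) * (1/((m:ℝ)+1)))) := by rw [hstep]
        _ ≤ (((m:ℝ) + 1) ^ N) * (((m:ℝ)+1) * (1 + 1 / ((m:ℝ)+1)) ^ N) := by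
            apply mul_le_mul_of_nonneg_left _ hpow
            exact mul_le_mul_of_nonneg_left hber hm0.le
        _ = ((m:ℝ) + 1) * ((m:ℝ) + 2) ^ N := by rw [h2, mul_pow]; ring
    calc ((m.factorial : ℝ) * (((m : ℝ) + 1) ^ N * (N : ℝ) ^ N)) * ((N : ℝ) + m)
        = (m.factorial : ℝ) * (N : ℝ) ^ N * ((((m : ℝ) + 1) ^ N) * ((N:ℝ) + m)) := by ring
      _ ≤ (m.factorial : ℝ) * (N : ℝ) ^ N * (((m:ℝ) + 1) * ((m:ℝ) + 2) ^ N) := by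
          apply mul_le_mul_of_nonneg_left hkey (by positivity)
      _ = ((m+1).factorial : ℝ) * ((((m+1) : ℕ) : ℝ) + 1) ^ N * (N : ℝ) ^ N := by
          rw [Nat.factorial_succ]; push_cast; ring
      _ = ((m+1).factorial : ℝ) * (((((m+1) : ℕ) : ℝ) + 1) ^ N * (N : ℝ) ^ N) := by ring

lemma g_nonneg {c : Fin n → ℝ} (hc : ∀ i, 0 ≤ c i) {α : ℝ} (hα : 0 < α) (x : Fin n → ℕ) :
    0 ≤ g c α x :=
  mul_nonneg (ascPochhammer_pos _ _ hα).le
    (Finset.prod_nonneg fun i _ => div_nonneg (pow_nonneg (hc i) _) (Nat.cast_nonneg _))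


lemma summable_g {c : Fin n → ℝ} (hc : ∀ i, 0 ≤ c i) (ht : ∑ i, c i < 1) {α : ℝ}
    (hα : 0 < α) : Summable (g c α) := by
  by_cases hzero : ∑ i, c i = 0
  · have hczero : ∀ i, c i = 0 := fun i =>
      (Finset.sum_eq_zero_iff_of_nonneg (fun i _ => hc i)).1 hzero i (mem_univ i)
    apply summable_of_ne_finset_zero (s := {(fun _ => 0 : Fin n → ℕ)})
    intro x hx
    have hex : ∃ i, x i ≠ 0 := by
      by_contra h
      push_neg at h
      exact hx (by simp only [Finset.mem_singleton]; funext i; exact h i)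
    obtain ⟨i, hi⟩ := hex
    unfold g
    rw [Finset.prod_eq_zero (mem_univ i) (by rw [hczero i, zero_pow hi, zero_div]), mul_zero]
  · have ht0 : 0 < ∑ i, c i :=
      lt_of_le_of_ne (Finset.sum_nonneg fun i _ => hc i) (Ne.symm hzero)
    set t := ∑ i, c i with htdef
    set s : ℝ := (1 + t)/2 with hsdef
    have hs0 : 0 < s := by rw [hsdef]; linarith
    have hs1 : s < 1 := by rw [hsdef]; linarith
    have hts : t < s := by rw [hsdef]; linarith
    have hu0 : 0 ≤ t/s := div_nonneg ht0.le hs0.le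
    have hu1 : t/s < 1 := (div_lt_one hs0).2 hts
    set N : ℕ := max 1 ⌈α⌉₊ with hNdef
    have hN1 : 1 ≤ N := le_max_left _ _
    have hαN : α ≤ (N:ℝ) := by
      refine (Nat.le_ceil α).trans ?_
      exact_mod_cast Nat.cast_le.2 (le_max_right 1 ⌈α⌉₊)
    have hb : Summable (fun m : ℕ => ((m:ℝ)+1)^N * (t/s)^m) := by
      have h := summable_pow_mul_geometric_of_norm_lt_one N
        (r := t/s) (by rw [Real.norm_eq_abs, abs_of_nonneg hu0]; exact hu1)
      have h2 : Summable (fun m : ℕ => (((m+1:ℕ)):ℝ)^N * (t/s)^(m+1)) :=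
        (summable_nat_add_iff (f := fun m : ℕ => ((m:ℕ):ℝ)^N * (t/s)^m) 1).2 h
      refine (h2.mul_left (s/t)).congr fun m => ?_
      push_cast
      rw [pow_succ]
      field_simp
    obtain ⟨C, hC⟩ : ∃ C, ∀ m : ℕ, ((m:ℝ)+1)^N * (t/s)^m ≤ C := by
      obtain ⟨C, hC⟩ := hb.tendsto_atTop_zero.bddAbove_range
      exact ⟨C, fun m => hC (Set.mem_range_self m)⟩
    have hbound : ∀ x : Fin n → ℕ, g c α x ≤ ((N:ℝ)^N * C) * s ^ (∑ i, x i) := by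
      intro x
      set m := ∑ i, x i with hm
      have hm0 : ((m.factorial : ℕ) : ℝ) ≠ 0 := Nat.cast_ne_zero.2 (Nat.factorial_ne_zero m)
      have hfact : (∏ i, ((x i).factorial : ℝ)) * (Nat.multinomial univ x : ℝ)
          = (m.factorial : ℝ) := by
        exact_mod_cast congrArg (Nat.cast : ℕ → ℝ) (Nat.multinomial_spec univ x)
      have hb0 : (∏ i, ((x i).factorial:ℝ)) ≠ 0 := by positivity
      have hmult0 : (Nat.multinomial univ x : ℝ) ≠ 0 :=
        Nat.cast_ne_zero.2 (Nat.multinomial_pos _ _).ne'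
      have hprod : ∏ i, c i ^ x i / ((x i).factorial : ℝ)
          = (Nat.multinomial univ x : ℝ) * (∏ i, c i ^ x i) / (m.factorial:ℝ) := by
        rw [Finset.prod_div_distrib, ← hfact, mul_comm (∏ i, ((x i).factorial:ℝ)) _,
          mul_div_mul_left _ _ hmult0]
      have heq : g c α x = (ascPochhammer ℝ m).eval α
          * ((Nat.multinomial univ x : ℝ) * (∏ i, c i ^ x i)) / (m.factorial:ℝ) := by
        rw [g, hprod, ← hm]
        ring
      have hA : (ascPochhammer ℝ m).eval α ≤ (m.factorial : ℝ) * (((m:ℝ)+1)^N * (N:ℝ)^N) :=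
        poch_le hα N hN1 hαN m
      have hB : (Nat.multinomial univ x : ℝ) * (∏ i, c i ^ x i) ≤ t ^ m :=
        multinomial_term_le hc x
      have hB0 : 0 ≤ (Nat.multinomial univ x : ℝ) * (∏ i, c i ^ x i) :=
        mul_nonneg (Nat.cast_nonneg _) (Finset.prod_nonneg fun i _ => pow_nonneg (hc i) _)
      have hsm : (t/s)^m * s^m = t^m := by rw [← mul_pow, div_mul_cancel₀ _ hs0.ne']
      have hfp : (0:ℝ) < (m.factorial : ℝ) := by positivity
      calc g c α x = (ascPochhammer ℝ m).eval α
            * ((Nat.multinomial univ x : ℝ) * (∏ i, c i ^ x i)) / (m.factorial:ℝ) := heq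
        _ ≤ ((m.factorial : ℝ) * (((m:ℝ)+1)^N * (N:ℝ)^N)) * t^m / (m.factorial:ℝ) :=
            div_le_div_of_nonneg_right
              (mul_le_mul hA hB hB0 (by positivity)) hfp.le
        _ = (((m:ℝ)+1)^N * (N:ℝ)^N) * t^m := by
            rw [mul_comm ((m.factorial:ℝ)) _, mul_assoc, mul_div_assoc,
              mul_div_cancel_left₀ _ hfp.ne']
        _ = (N:ℝ)^N * ((((m:ℝ)+1)^N * (t/s)^m) * s^m) := by rw [← hsm]; ring
        _ ≤ (N:ℝ)^N * (C * s^m) := by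
            apply mul_le_mul_of_nonneg_left _ (by positivity)
            exact mul_le_mul_of_nonneg_right (hC m) (by positivity)
        _ = ((N:ℝ)^N * C) * s ^ m := by ring
    exact Summable.of_nonneg_of_le (g_nonneg hc hα) hbound
      ((summable_geom_pi hs0.le hs1 n).mul_left _)


lemma g_shift (c : Fin n → ℝ) (α : ℝ) (i : Fin n) (y : Fin n → ℕ) :
    ((y i : ℝ) + 1) * g c α (Function.update y i (y i + 1)) = α * c i * g c (α + 1) y := by
  have hsum : ∑ j, (Function.update y i (y i + 1)) j = (∑ j, y j) + 1 := by
    rw [Finset.sum_update_of_mem (mem_univ i)]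
    rw [← Finset.sum_erase_add univ y (mem_univ i), Finset.sdiff_singleton_eq_erase]
    ring
  have hpoch : (ascPochhammer ℝ ((∑ j, y j) + 1)).eval α
      = α * (ascPochhammer ℝ (∑ j, y j)).eval (α + 1) := by
    rw [ascPochhammer_succ_left, Polynomial.eval_mul, Polynomial.eval_X, Polynomial.eval_comp]
    simp
  have hprod : ∏ j, c j ^ (Function.update y i (y i + 1)) j
        / (((Function.update y i (y i + 1)) j).factorial : ℝ)
      = (c i ^ (y i + 1) / (((y i + 1).factorial : ℕ) : ℝ))
        * ∏ j ∈ univ.erase i, c j ^ y j / (((y j).factorial : ℕ) : ℝ) := by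
    rw [← Finset.mul_prod_erase univ _ (mem_univ i)]
    congr 1
    · rw [Function.update_self]
    · refine Finset.prod_congr rfl fun w hw => ?_
      rw [Function.update_of_ne (Finset.ne_of_mem_erase hw)]
  have hprod2 : ∏ j, c j ^ y j / (((y j).factorial : ℕ) : ℝ)
      = (c i ^ y i / (((y i).factorial : ℕ) : ℝ))
        * ∏ j ∈ univ.erase i, c j ^ y j / (((y j).factorial : ℕ) : ℝ) :=
    (Finset.mul_prod_erase univ _ (mem_univ i)).symm
  rw [g, g, hsum, hpoch, hprod, hprod2]
  have hy1 : (((y i + 1).factorial : ℕ) : ℝ) = ((y i : ℝ) + 1) * (((y i).factorial : ℕ) : ℝ) := by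
    rw [Nat.factorial_succ]
    push_cast
    ring
  rw [hy1, pow_succ]
  have h0 : ((y i : ℝ) + 1) ≠ 0 := by positivity
  have h2 : (((y i).factorial : ℕ) : ℝ) ≠ 0 := Nat.cast_ne_zero.2 (Nat.factorial_ne_zero _)
  field_simp

lemma hasSum_shift {c : Fin n → ℝ} {α : ℝ} (i : Fin n)
    {F : (Fin n → ℕ) → ℝ} {a : ℝ}
    (hF : HasSum (fun y => F y * g c (α + 1) y) a) :
    HasSum (fun x => (x i : ℝ) * F (Function.update x i (x i - 1)) * g c α x)
      (α * c i * a) := by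
  set φ : (Fin n → ℕ) → (Fin n → ℕ) := fun y => Function.update y i (y i + 1) with hφ
  have hinj : Function.Injective φ := by
    intro y z h
    have h' := congrFun h
    funext w
    by_cases hw : w = i
    · subst hw
      have := h' w
      simp only [hφ, Function.update_self] at this
      omega
    · have := h' w
      simpa only [hφ, Function.update_of_ne hw] using this
  have hvanish : ∀ x ∉ Set.range φ,
      (x i : ℝ) * F (Function.update x i (x i - 1)) * g c α x = 0 := by
    intro x hx
    have hxi : x i = 0 := by
      by_contra h
      refine hx ⟨Function.update x i (x i - 1), ?_⟩
      simp only [hφ]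
      rw [Function.update_idem, Function.update_self,
        Nat.sub_add_cancel (Nat.one_le_iff_ne_zero.2 h)]
      exact Function.update_eq_self i x
    simp [hxi]
  rw [← Function.Injective.hasSum_iff hinj hvanish]
  have hcomp : ((fun x => (x i : ℝ) * F (Function.update x i (x i - 1)) * g c α x) ∘ φ)
      = fun y => α * c i * (F y * g c (α + 1) y) := by
    funext y
    have h1 : φ y i = y i + 1 := Function.update_self i (y i + 1) y
    have h2 : Function.update (φ y) i (φ y i - 1) = y := by
      simp only [hφ]
      rw [Function.update_idem, Function.update_self, Nat.add_sub_cancel]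
      exact Function.update_eq_self i y
    show ((φ y) i : ℝ) * F (Function.update (φ y) i ((φ y) i - 1)) * g c α (φ y)
      = α * c i * (F y * g c (α + 1) y)
    rw [h2, h1]
    have h3 := g_shift c α i y
    push_cast
    calc ((y i : ℝ) + 1) * F y * g c α (Function.update y i (y i + 1))
        = F y * (((y i : ℝ) + 1) * g c α (Function.update y i (y i + 1))) := by ring
      _ = F y * (α * c i * g c (α + 1) y) := by rw [h3]
      _ = α * c i * (F y * g c (α + 1) y) := by ring
  rw [hcomp]
  exact hF.mul_left _


lemma hasSum_moment1 {c : Fin n → ℝ} {α : ℝ} {A : ℝ} (i : Fin n)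
    (hS : HasSum (g c (α + 1)) A) :
    HasSum (fun x => (x i : ℝ) * g c α x) (α * c i * A) := by
  have h := hasSum_shift (c := c) (α := α) i (F := fun _ => 1)
    (by simpa using hS)
  simpa using h

lemma hasSum_g_rec {c : Fin n → ℝ} (hc : ∀ i, 0 ≤ c i) (ht : ∑ i, c i < 1) {α : ℝ}
    (hα : 0 < α) :
    HasSum (g c α) ((1 - ∑ i, c i) * ∑' y, g c (α + 1) y) := by
  have hS : HasSum (g c (α + 1)) (∑' y, g c (α + 1) y) :=
    (summable_g hc ht (by linarith)).hasSum
  set A := ∑' y, g c (α + 1) y with hA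
  have hMsum : HasSum (fun x => (∑ i, (x i : ℝ)) * g c α x) (∑ i, α * c i * A) := by
    have h := hasSum_sum (s := univ) (f := fun i x => (x i : ℝ) * g c α x)
      (a := fun i => α * c i * A) (fun i _ => hasSum_moment1 i hS)
    have hfe : (fun b : Fin n → ℕ => ∑ i, (fun i x => (x i : ℝ) * g c α x) i b)
        = fun x : Fin n → ℕ => (∑ i, (x i : ℝ)) * g c α x :=
      funext fun x => by rw [Finset.sum_mul]
    rw [hfe] at h
    exact h
  have key : ∀ x, g c α x = g c (α + 1) x - (1/α) * ((∑ i, (x i : ℝ)) * g c α x) := by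
    intro x
    have hcast : (∑ i, (x i : ℝ)) = ((∑ i, x i : ℕ) : ℝ) := by push_cast; rfl
    have h1 : α * g c (α + 1) x = (α + ((∑ i, x i : ℕ) : ℝ)) * g c α x := by
      rw [g, g]
      have e1 : α * ((ascPochhammer ℝ (∑ i, x i)).eval (α + 1))
          = (ascPochhammer ℝ ((∑ i, x i) + 1)).eval α := by
        rw [ascPochhammer_succ_left, Polynomial.eval_mul, Polynomial.eval_X,
          Polynomial.eval_comp]
        simp
      have e2 : (ascPochhammer ℝ ((∑ i, x i) + 1)).eval α
          = (ascPochhammer ℝ (∑ i, x i)).eval α * (α + ((∑ i, x i : ℕ) : ℝ)) :=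
        ascPochhammer_succ_eval _ _
      calc α * ((ascPochhammer ℝ (∑ i, x i)).eval (α + 1) * ∏ i, c i ^ x i / ((x i).factorial:ℝ))
          = (α * (ascPochhammer ℝ (∑ i, x i)).eval (α + 1)) * ∏ i, c i ^ x i / ((x i).factorial:ℝ) := by
            ring
        _ = ((ascPochhammer ℝ (∑ i, x i)).eval α * (α + ((∑ i, x i : ℕ) : ℝ)))
              * ∏ i, c i ^ x i / ((x i).factorial:ℝ) := by rw [e1, e2]
        _ = (α + ((∑ i, x i : ℕ) : ℝ)) * ((ascPochhammer ℝ (∑ i, x i)).eval α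
              * ∏ i, c i ^ x i / ((x i).factorial:ℝ)) := by ring
    rw [hcast]
    have hα0 : α ≠ 0 := hα.ne'
    have h2 : g c (α + 1) x = (1/α) * ((α + ((∑ i, x i : ℕ) : ℝ)) * g c α x) := by
      rw [← h1]
      field_simp
    rw [h2]
    field_simp
    ring
  have hfinal := hS.sub (hMsum.mul_left (1/α))
  have hval : A - (1/α) * (∑ i, α * c i * A) = (1 - ∑ i, c i) * A := by
    have hthis : ∑ i, α * c i * A = α * ((∑ i, c i) * A) := by
      calc ∑ i, α * c i * A = ∑ i, α * (c i * A) :=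
            Finset.sum_congr rfl fun i _ => by ring
        _ = α * ∑ i, c i * A := (Finset.mul_sum _ _ _).symm
        _ = α * ((∑ i, c i) * A) := by rw [Finset.sum_mul]
    rw [hthis]
    field_simp
  rw [hval] at hfinal
  have hfe : (fun x => g c (α + 1) x - (1/α) * ((∑ i, (x i : ℝ)) * g c α x)) = g c α :=
    funext fun x => (key x).symm
  rw [hfe] at hfinal
  exact hfinal

end MeixnerAux



/-- orthogonality of distinct degree-one Meixner polynomials,
given the two constraints on the parameters `u`. -/
theorem deg_one_orthogonal (n : ℕ) (β : ℝ) (c : Fin n → ℝ) (u : Fin n → Fin n → ℝ)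
    (hβ : 0 < β) (hc : ∀ i, 0 < c i) (hsum : ∑ i, c i < 1)
    (hu1 : ∀ j, ∑ i, c i * u i j = (∑ i, c i) - 1)
    (hu2 : ∀ j k, j ≠ k → ∑ i, c i * u i j * u i k = (∑ i, c i) - 1)
    (j k : Fin n) (hjk : j ≠ k) :
    ∑' x : Fin n → ℕ,
      meixnerW n β c x * (1 + (1 / β) * ∑ i, u i j * (x i : ℝ))
        * (1 + (1 / β) * ∑ i, u i k * (x i : ℝ)) = 0 := by

  classical
  open MeixnerAux Finset in
  have hc0 : ∀ i, 0 ≤ c i := fun i => (hc i).le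
  have hβ0 : β ≠ 0 := hβ.ne'
  have hβ1 : (0:ℝ) < β + 1 := by linarith
  have hβ2 : (0:ℝ) < β + 2 := by linarith
  set t := ∑ i, c i with htdef
  have hS2 : HasSum (MeixnerAux.g c (β + 2)) (∑' y, MeixnerAux.g c (β + 2) y) :=
    (MeixnerAux.summable_g hc0 hsum hβ2).hasSum
  set B := ∑' y, MeixnerAux.g c (β + 2) y with hB
  have hrec2 : HasSum (MeixnerAux.g c (β + 1)) ((1 - t) * B) := by
    have h := MeixnerAux.hasSum_g_rec hc0 hsum hβ1
    rw [show β + 1 + 1 = β + 2 by ring] at h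
    exact h
  set A := (1 - t) * B with hA
  have hrec1 : HasSum (MeixnerAux.g c β) ((1 - t) * A) := by
    have h := MeixnerAux.hasSum_g_rec hc0 hsum hβ
    rw [hrec2.tsum_eq] at h
    exact h
  have M1 : ∀ i, HasSum (fun x => (x i : ℝ) * MeixnerAux.g c β x) (β * c i * A) :=
    fun i => MeixnerAux.hasSum_moment1 i hrec2
  have M1' : ∀ l, HasSum (fun y => (y l : ℝ) * MeixnerAux.g c (β + 1) y)
      ((β + 1) * c l * B) := by
    intro l
    refine MeixnerAux.hasSum_moment1 (α := β + 1) l ?_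
    have h := hS2
    rwa [show (β:ℝ) + 2 = β + 1 + 1 by ring] at h
  have M2 : ∀ i l, HasSum (fun x => (x i : ℝ) * (x l : ℝ) * MeixnerAux.g c β x)
      (β * c i * ((β + 1) * c l * B) + (if i = l then β * c i * A else 0)) := by
    intro i l
    by_cases hil : i = l
    · subst hil
      rw [if_pos rfl]
      have h1 := MeixnerAux.hasSum_shift (c := c) (α := β) i
        (F := fun y => (y i : ℝ)) (M1' i)
      have h2 := h1.add (M1 i)
      have hfe : (fun x => ((x i : ℝ)
            * ((Function.update x i (x i - 1) i : ℕ) : ℝ) * MeixnerAux.g c β x)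
            + (x i : ℝ) * MeixnerAux.g c β x)
          = fun x => (x i : ℝ) * (x i : ℝ) * MeixnerAux.g c β x := by
        funext x
        rw [Function.update_self]
        rcases Nat.eq_zero_or_pos (x i) with h0 | hpos
        · simp [h0]
        · have hcast : ((x i - 1 : ℕ) : ℝ) = (x i : ℝ) - 1 := by
            rw [Nat.cast_sub hpos]
            norm_num
          rw [hcast]
          ring
      rw [hfe] at h2
      exact h2
    · rw [if_neg hil, add_zero]
      have h1 := MeixnerAux.hasSum_shift (c := c) (α := β) i
        (F := fun y => (y l : ℝ)) (M1' l)
      have hfe : (fun x => (x i : ℝ)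
            * ((Function.update x i (x i - 1) l : ℕ) : ℝ) * MeixnerAux.g c β x)
          = fun x => (x i : ℝ) * (x l : ℝ) * MeixnerAux.g c β x := by
        funext x
        rw [Function.update_of_ne (fun h => hil h.symm)]
      rw [hfe] at h1
      exact h1
  have HL : ∀ w, HasSum (fun x => (∑ i, u i w * (x i : ℝ)) * MeixnerAux.g c β x)
      (β * (t - 1) * A) := by
    intro w
    have h := hasSum_sum (s := univ)
      (f := fun i x => u i w * ((x i : ℝ) * MeixnerAux.g c β x))
      (a := fun i => u i w * (β * c i * A)) (fun i _ => (M1 i).mul_left (u i w))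
    have hfe : (fun b : Fin n → ℕ =>
          ∑ i, (fun i x => u i w * ((x i : ℝ) * MeixnerAux.g c β x)) i b)
        = fun x : Fin n → ℕ => (∑ i, u i w * (x i : ℝ)) * MeixnerAux.g c β x := by
      funext x
      rw [Finset.sum_mul]
      exact Finset.sum_congr rfl fun i _ => by ring
    have hval : ∑ i, u i w * (β * c i * A) = β * (t - 1) * A := by
      have h1 : ∑ i, u i w * (β * c i * A) = (∑ i, c i * u i w) * (β * A) := by
        rw [Finset.sum_mul]
        exact Finset.sum_congr rfl fun i _ => by ring
      rw [h1, hu1 w]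
      ring
    rw [hfe, hval] at h
    exact h
  have HQ : HasSum (fun x => (∑ i, u i j * (x i : ℝ)) * (∑ l, u l k * (x l : ℝ))
        * MeixnerAux.g c β x)
      (β * (β + 1) * (t - 1) ^ 2 * B + β * (t - 1) * A) := by
    have hin : ∀ i : Fin n, HasSum
        (fun x => u i j * (x i : ℝ) * ((∑ l, u l k * (x l : ℝ)) * MeixnerAux.g c β x))
        ((c i * u i j) * (∑ l, c l * u l k) * (β * (β + 1) * B)
          + (c i * u i j * u i k) * (β * A)) := by
      intro i
      have h := hasSum_sum (s := univ)
        (f := fun l x => u i j * u l k * ((x i : ℝ) * (x l : ℝ) * MeixnerAux.g c β x))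
        (a := fun l => u i j * u l k
          * (β * c i * ((β + 1) * c l * B) + (if i = l then β * c i * A else 0)))
        (fun l _ => (M2 i l).mul_left _)
      have hfe : (fun b : Fin n → ℕ => ∑ l, (fun l x => u i j * u l k
            * ((x i : ℝ) * (x l : ℝ) * MeixnerAux.g c β x)) l b)
          = fun x : Fin n → ℕ => u i j * (x i : ℝ)
            * ((∑ l, u l k * (x l : ℝ)) * MeixnerAux.g c β x) := by
        funext x
        have e1 : u i j * (x i : ℝ) * ((∑ l, u l k * (x l : ℝ)) * MeixnerAux.g c β x)
            = (∑ l, u l k * (x l : ℝ)) * (u i j * (x i : ℝ) * MeixnerAux.g c β x) := by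
          ring
        rw [e1, Finset.sum_mul]
        exact Finset.sum_congr rfl fun l _ => by ring
      have hval : ∑ l, u i j * u l k
            * (β * c i * ((β + 1) * c l * B) + (if i = l then β * c i * A else 0))
          = (c i * u i j) * (∑ l, c l * u l k) * (β * (β + 1) * B)
            + (c i * u i j * u i k) * (β * A) := by
        have hsp : ∀ l, u i j * u l k
              * (β * c i * ((β + 1) * c l * B) + (if i = l then β * c i * A else 0))
            = ((c i * u i j) * (β * (β + 1) * B)) * (c l * u l k)
              + (if i = l then u i j * u l k * (β * c i * A) else 0) := by
          intro l
          by_cases h : i = l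
          · rw [if_pos h, if_pos h]; ring
          · rw [if_neg h, if_neg h]; ring
        rw [Finset.sum_congr rfl fun l _ => hsp l, Finset.sum_add_distrib,
          ← Finset.mul_sum, Finset.sum_ite_eq univ i
            (fun l => u i j * u l k * (β * c i * A)), if_pos (Finset.mem_univ i)]
        ring
      rw [hfe, hval] at h
      exact h
    have h := hasSum_sum (s := univ)
      (f := fun i x => u i j * (x i : ℝ)
        * ((∑ l, u l k * (x l : ℝ)) * MeixnerAux.g c β x))
      (a := fun i => (c i * u i j) * (∑ l, c l * u l k) * (β * (β + 1) * B)
        + (c i * u i j * u i k) * (β * A)) (fun i _ => hin i)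
    have hfe : (fun b : Fin n → ℕ => ∑ i, (fun i x => u i j * (x i : ℝ)
          * ((∑ l, u l k * (x l : ℝ)) * MeixnerAux.g c β x)) i b)
        = fun x : Fin n → ℕ => (∑ i, u i j * (x i : ℝ)) * (∑ l, u l k * (x l : ℝ))
          * MeixnerAux.g c β x := by
      funext x
      have e1 : (∑ i, u i j * (x i : ℝ)) * (∑ l, u l k * (x l : ℝ))
            * MeixnerAux.g c β x
          = (∑ i, u i j * (x i : ℝ)) * ((∑ l, u l k * (x l : ℝ))
            * MeixnerAux.g c β x) := by ring
      rw [e1, Finset.sum_mul]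
    have hval : ∑ i, ((c i * u i j) * (∑ l, c l * u l k) * (β * (β + 1) * B)
          + (c i * u i j * u i k) * (β * A))
        = β * (β + 1) * (t - 1) ^ 2 * B + β * (t - 1) * A := by
      rw [Finset.sum_add_distrib]
      have e1 : ∑ i, (c i * u i j) * (∑ l, c l * u l k) * (β * (β + 1) * B)
          = (∑ i, c i * u i j) * ((∑ l, c l * u l k) * (β * (β + 1) * B)) := by
        rw [Finset.sum_mul]
        exact Finset.sum_congr rfl fun i _ => by ring
      have e2 : ∑ i, (c i * u i j * u i k) * (β * A)
          = (∑ i, c i * u i j * u i k) * (β * A) := by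
        rw [Finset.sum_mul]
      rw [e1, e2, hu1 j, hu1 k, hu2 j k hjk]
      ring
    rw [hfe, hval] at h
    exact h
  have Hfinal : HasSum (fun x => MeixnerAux.g c β x
      * (1 + (1 / β) * ∑ i, u i j * (x i : ℝ))
      * (1 + (1 / β) * ∑ i, u i k * (x i : ℝ))) 0 := by
    have h := (hrec1.add (((HL j).add (HL k)).mul_left (1 / β))).add
      (HQ.mul_left (1 / β ^ 2))
    have hfe : (fun x => (MeixnerAux.g c β x
          + (1 / β) * ((∑ i, u i j * (x i : ℝ)) * MeixnerAux.g c β x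
            + (∑ i, u i k * (x i : ℝ)) * MeixnerAux.g c β x))
          + (1 / β ^ 2) * ((∑ i, u i j * (x i : ℝ)) * (∑ l, u l k * (x l : ℝ))
            * MeixnerAux.g c β x))
        = fun x => MeixnerAux.g c β x
          * (1 + (1 / β) * ∑ i, u i j * (x i : ℝ))
          * (1 + (1 / β) * ∑ i, u i k * (x i : ℝ)) := by
      funext x
      field_simp
      ring
    have hval : ((1 - t) * A + (1 / β) * (β * (t - 1) * A + β * (t - 1) * A))
        + (1 / β ^ 2) * (β * (β + 1) * (t - 1) ^ 2 * B + β * (t - 1) * A) = 0 := by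
      rw [hA]
      field_simp
      ring
    rw [hfe, hval] at h
    exact h
  have K := Hfinal.mul_left ((1 - t) ^ β)
  rw [mul_zero] at K
  have hfe2 : (fun x => (1 - t) ^ β * (MeixnerAux.g c β x
        * (1 + (1 / β) * ∑ i, u i j * (x i : ℝ))
        * (1 + (1 / β) * ∑ i, u i k * (x i : ℝ))))
      = fun x => meixnerW n β c x * (1 + (1 / β) * ∑ i, u i j * (x i : ℝ))
        * (1 + (1 / β) * ∑ i, u i k * (x i : ℝ)) := by
    funext x
    rw [meixnerW, MeixnerAux.g, ← htdef]
    ring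
  rw [hfe2] at K
  exact K.tsum_eq
end
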